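/- Let (h_k)_{k≥0} be a non-decreasing real sequence with ∑_k 2^{−k} h_k < ∞, and for each n let Φ_n be the first order branching clustering function on 𝕃₀⁽ⁿ⁾ with parameters (h_k)_{k=0}^n and h = h_n. If lim_{k→∞} k·2^k·e^{−h_k} = ∞ (equivalently, lim_{k→∞} ((ln 2)k + ln k − h_k) = ∞), then there is no wetting transition, i.e. J* = −∞. -/

import Mathlib

open Filter
open scoped Classical

noncomputable section

namespace PWC

/-- Leaves of the binary tree `𝕋⁽ⁿ⁾` of depth `n`: binary words of length `n`
(coordinate `0` is the first step away from the root). -/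
abbrev Leaf (n : ℕ) := Fin n → Bool

/-- The age (distance from the leaves) of the youngest common ancestor `u ∧ v` of two
leaves: `n` minus the length of their longest common prefix. -/
def meetAge {n : ℕ} (u v : Leaf n) : ℕ :=
  if u = v then 0 else n - sInf {i : ℕ | ∃ h : i < n, u ⟨i, h⟩ ≠ v ⟨i, h⟩}

/-- Canonical representative (as a leaf) of the ancestor of `u` at age `k`:
keep the first `n - k` coordinates and pad by `false`. -/
def trunc {n : ℕ} (k : ℕ) (u : Leaf n) : Leaf n :=
  fun i => if (i : ℕ) < n - k then u i else false

/-- The branching points `ℬ(A) ∩ 𝕃_k` of `A` of age `k`, encoded by the canonical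
representatives of the corresponding ancestors. -/
def branchPts {n : ℕ} (A : Finset (Leaf n)) (k : ℕ) : Finset (Leaf n) :=
  ((A ×ˢ A).filter (fun p => meetAge p.1 p.2 = k)).image (fun p => trunc k p.1)

/-- `b_k(A)`: the number of branching points of `A` of age `k`. -/
def bcount {n : ℕ} (A : Finset (Leaf n)) (k : ℕ) : ℕ := (branchPts A k).card

/-- `b_{k,ℓ}(A)`: the number of branching points of `A` of age `ℓ` whose direct
branching ancestor has age `k`; for `k = n+1` the indicator that the oldest branching
point of `A` has age `ℓ` (i.e. the branching points at age `ℓ` having no strictly older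
branching ancestor). -/
def b2count {n : ℕ} (A : Finset (Leaf n)) (k l : ℕ) : ℕ :=
  if k = n + 1 then
    ((branchPts A l).filter (fun w => ∀ j, l < j → j ≤ n → trunc j w ∉ branchPts A j)).card
  else
    ((branchPts A l).filter (fun w => trunc k w ∈ branchPts A k ∧
      ∀ j, l < j → j < k → trunc j w ∉ branchPts A j)).card

/-- `A ≺ B` : `A` is more clustered than `B`. -/
def MoreClustered {n : ℕ} (A B : Finset (Leaf n)) : Prop :=
  ∃ σ : Leaf n → Leaf n, Set.BijOn σ ↑A ↑B ∧
    ∀ u ∈ A, ∀ v ∈ A, meetAge u v ≤ meetAge (σ u) (σ v)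

/-- `A ∼ B` : the subtrees of `𝕋⁽ⁿ⁾` generated by `A` and `B` are graph-isomorphic,
i.e. there is a bijection of the leaf sets preserving all meet ages. -/
def EquivClustered {n : ℕ} (A B : Finset (Leaf n)) : Prop :=
  ∃ σ : Leaf n → Leaf n, Set.BijOn σ ↑A ↑B ∧
    ∀ u ∈ A, ∀ v ∈ A, meetAge (σ u) (σ v) = meetAge u v

/-- A clustering function: vanishes on `∅` and is invariant under isomorphism of the
generated subtrees. -/
def IsClusteringFn {n : ℕ} (Φ : Finset (Leaf n) → ℝ) : Prop :=
  Φ ∅ = 0 ∧ ∀ A B : Finset (Leaf n), EquivClustered A B → Φ A = Φ B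

/-- A monotone clustering function. -/
def IsMonotoneClusteringFn {n : ℕ} (Φ : Finset (Leaf n) → ℝ) : Prop :=
  IsClusteringFn Φ ∧
    (∀ A B : Finset (Leaf n), MoreClustered A B → Φ A ≤ Φ B) ∧
    (∀ A B : Finset (Leaf n), Disjoint A B → Φ (A ∪ B) ≤ Φ A + Φ B)

/-- The partition function `Z_n^{Φ,J}`. -/
def Z (n : ℕ) (Φ : Finset (Leaf n) → ℝ) (J : ℝ) : ℝ :=
  ∑ A : Finset (Leaf n), Real.exp (J * (A.card : ℝ) - Φ A)

/-- The finite-volume free energy `ζ_n^Φ(J) = 2⁻ⁿ ln Z_n^{Φ,J}`. -/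
def zetaN (n : ℕ) (Φ : Finset (Leaf n) → ℝ) (J : ℝ) : ℝ :=
  Real.log (Z n Φ J) / 2 ^ n

/-- The canonical partition function `W_n^Φ(a₀)`. -/
def W (n : ℕ) (Φ : Finset (Leaf n) → ℝ) (a₀ : ℕ) : ℝ :=
  ∑ A ∈ Finset.univ.filter (fun A : Finset (Leaf n) => A.card = a₀), Real.exp (-Φ A)

/-- The finite-volume canonical free energy `ω_n^Φ(ε) = 2⁻ⁿ ln W_n^Φ(ε 2ⁿ)` (for a
dyadic `ε ∈ [0,1]` and `n` large, `⌊ε 2ⁿ⌋ = ε 2ⁿ`). -/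
def omegaN (n : ℕ) (Φ : Finset (Leaf n) → ℝ) (ε : ℝ) : ℝ :=
  Real.log (W n Φ ⌊ε * 2 ^ n⌋₊) / 2 ^ n

/-- The expected density `ρ_n^Φ(J)` of the dry set under the PWC measure. -/
def rhoN (n : ℕ) (Φ : Finset (Leaf n) → ℝ) (J : ℝ) : ℝ :=
  (∑ A : Finset (Leaf n), (A.card : ℝ) * Real.exp (J * (A.card : ℝ) - Φ A)) /
    (2 ^ n * Z n Φ J)

/-- A dyadic rational. -/
def IsDyadic (x : ℝ) : Prop := ∃ (k : ℤ) (m : ℕ), x = (k : ℝ) / 2 ^ m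

/-- The hypotheses of the general theory (Proposition 1.2): each `Φ_n` (for `n ≥ 1`) is
a monotone, non-negative clustering function, and `Φ_n(A) ≤ Φ_{n-1}(A) + γ_n` for any
`A` contained in the leaf set of one of the two subtrees of `𝕋⁽ⁿ⁾` rooted at a child of
the root (identified with `𝕋⁽ⁿ⁻¹⁾` by prepending the corresponding letter), where
`γ_n ≥ 0` and `∑ γ_n 2⁻ⁿ < ∞`. -/
structure GoodSeq (Φ : ∀ n, Finset (Fin n → Bool) → ℝ) (γ : ℕ → ℝ) : Prop where
  mono : ∀ n, 1 ≤ n → IsMonotoneClusteringFn (Φ n)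
  nonneg : ∀ n, 1 ≤ n → ∀ A, 0 ≤ Φ n A
  gamma_nonneg : ∀ n, 0 ≤ γ n
  gamma_summable : Summable fun n => γ n / 2 ^ n
  subtree : ∀ (n : ℕ) (b : Bool) (A : Finset (Fin n → Bool)),
    Φ (n + 1) (A.image fun u => Fin.cons b u) ≤ Φ n A + γ (n + 1)

/-- The first order branching clustering function with parameters `(h_k)_{k=0}^n`, `h`. -/
def foPhi (n : ℕ) (hs : ℕ → ℝ) (h : ℝ) (A : Finset (Leaf n)) : ℝ :=
  if A = ∅ then 0 else (∑ k ∈ Finset.range (n + 1), hs k * (bcount A k : ℝ)) + h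

/-- The second order branching clustering function with parameters
`(h_{k,ℓ})_{0 ≤ ℓ < k ≤ n+1}`, `h`. -/
def soPhi (n : ℕ) (H : ℕ → ℕ → ℝ) (h : ℝ) (A : Finset (Leaf n)) : ℝ :=
  if A = ∅ then 0
  else (∑ k ∈ Finset.range (n + 2), ∑ l ∈ Finset.range k, H k l * (b2count A k l : ℝ)) + h

/-- A non-decreasing (infinite) triangular array. -/
def ArrayMono (H : ℕ → ℕ → ℝ) : Prop :=
  ∀ k k' l l' : ℕ, l < k → l' < k' → k ≤ k' → l ≤ l' → H k l ≤ H k' l'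

/-- The Dirichlet energy on `𝕋⁽ⁿ⁾` of `f` (vertices encoded as words of length `≤ n`,
read from the root; a vertex of length `m` has age `n - m` and its parent edge has
conductance `C (n - m)`). -/
def energy (n : ℕ) (C : ℕ → ℝ) (f : List Bool → ℝ) : ℝ :=
  ∑ m ∈ Finset.Icc 1 n, ∑ v : Fin m → Bool,
    C (n - m) * (f (List.ofFn v) - f (List.ofFn v).dropLast) ^ 2

/-- The capacity of a set of leaves `A ⊆ 𝕃₀⁽ⁿ⁾`. -/
def cap (n : ℕ) (C : ℕ → ℝ) (A : Finset (Leaf n)) : ℝ :=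
  sInf {x : ℝ | ∃ f : List Bool → ℝ, f [] = 1 ∧ (∀ u ∈ A, f (List.ofFn u) = 0) ∧
    x = energy n C f}

/-!
Splitting a set of leaves of `𝕋⁽ⁿ⁺¹⁾` along the two subtrees of the root, its branching weight
`e^{J|A| - ∑ h_k b_k(A)}` is the product of the weights of the two halves, times `e^{-h_{n+1}}` when
both halves are nonempty. Hence the total weight `x_n` of the nonempty sets obeys
`x_{n+1} = x_n (2 + e^{-h_{n+1}} x_n)`, and `Z_n = 1 + e^{-h_n} x_n`.

For `u_n = ln x_n` this gives `2 u_n - h_{n+1} ≤ u_{n+1} ≤ 2 u_n + c`, so `u_n / 2ⁿ` converges because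
`∑ h_k 2⁻ᵏ < ∞`. Since `k 2ᵏ e^{-h_k} → ∞`, the recursion forces `x_n ≥ a (n + 1) 2ⁿ` for some
`a > 0`, one factor `n` more than the trivial bound; and once `u_m` exceeds the bound
`k ln 2 + ln k - C` that `h_k` obeys beyond `m`, the excess doubles at every step, so the limit of
`u_n / 2ⁿ` is positive.
-/

section Tree

variable {n : ℕ}

lemma meetAge_cons_cons (b b' : Bool) (u v : Leaf n) :
    meetAge (Fin.cons b u : Leaf (n + 1)) (Fin.cons b' v) =
      if b = b' then meetAge u v else n + 1 := by
  let p : ℕ → Prop := fun i => ∃ h : i < n + 1,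
    (Fin.cons b u : Leaf (n + 1)) ⟨i, h⟩ ≠ (Fin.cons b' v : Leaf (n + 1)) ⟨i, h⟩
  split_ifs with hb
  · subst hb
    by_cases huv : u = v
    · simp [meetAge, huv]
    have hshift : {i | p (i + 1)} = {i | ∃ h : i < n, u ⟨i, h⟩ ≠ v ⟨i, h⟩} := by
      ext i
      simp [p, Fin.cons]
    have hpos : 1 ≤ sInf {i | p i} := by
      refine Nat.one_le_iff_ne_zero.mpr fun h0 => ?_
      rcases Nat.sInf_eq_zero.mp h0 with ⟨_, h⟩ | hT
      · simp at h
      · obtain ⟨i, hi⟩ := Function.ne_iff.mp huv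
        have : i.1 + 1 ∈ {i | p i} := ⟨by omega, by simpa [Fin.cons] using hi⟩
        simp [hT] at this
    have := Nat.sInf_add hpos
    rw [hshift] at this
    simp only [meetAge, Fin.cons_inj, true_and, huv, if_false]
    change n + 1 - sInf {i | p i} = _
    omega
  · have h0 : sInf {i | p i} = 0 := Nat.sInf_eq_zero.mpr (Or.inl ⟨by omega, by simpa using hb⟩)
    simp only [meetAge, Fin.cons_inj, hb, false_and, if_false]
    change n + 1 - sInf {i | p i} = _
    omega

lemma meetAge_le (u v : Leaf n) : meetAge u v ≤ n := by
  unfold meetAge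
  split <;> omega

lemma trunc_cons {k : ℕ} (hk : k ≤ n) (b : Bool) (u : Leaf n) :
    trunc k (Fin.cons b u : Leaf (n + 1)) = Fin.cons b (trunc k u) := by
  ext i
  refine Fin.cases ?_ (fun j => ?_) i
  · simp [trunc]
    omega
  · simp only [trunc, Fin.cons_succ, Fin.val_succ,
      show (j : ℕ) + 1 < n + 1 - k ↔ (j : ℕ) < n - k by omega]

lemma mem_branchPts {A : Finset (Leaf n)} {k : ℕ} {w : Leaf n} :
    w ∈ branchPts A k ↔ ∃ u ∈ A, ∃ v ∈ A, meetAge u v = k ∧ trunc k u = w := by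
  simp [branchPts, and_assoc]

def glue (B : Bool → Finset (Leaf n)) : Finset (Leaf (n + 1)) :=
  Finset.univ.biUnion fun b =>
    (B b).map ⟨Fin.cons b, Fin.cons_right_injective (α := fun _ => Bool) b⟩

@[simp]
lemma cons_mem_glue {B : Bool → Finset (Leaf n)} {b : Bool} {u : Leaf n} :
    (Fin.cons b u : Leaf (n + 1)) ∈ glue B ↔ u ∈ B b := by
  cases b <;> simp [glue]

lemma card_glue (B : Bool → Finset (Leaf n)) : (glue B).card = ∑ b, (B b).card := by
  rw [glue, Finset.card_biUnion]
  · simp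
  · intro b _ b' _ hbb'
    simp only [Function.onFun, Finset.disjoint_left, Finset.mem_map, Function.Embedding.coeFn_mk]
    rintro _ ⟨u, -, rfl⟩ ⟨v, -, h⟩
    exact hbb' (Fin.cons_inj.mp h).1.symm

lemma glue_bijective : Function.Bijective (glue (n := n)) := by
  refine (Fintype.bijective_iff_injective_and_card _).mpr ⟨fun B B' h => ?_, ?_⟩
  · funext b
    ext u
    rw [← cons_mem_glue, h, cons_mem_glue]
  · simp [Fintype.card_finset, pow_succ, pow_mul]

lemma branchPts_glue (B : Bool → Finset (Leaf n)) {k : ℕ} (hk : k ≤ n) :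
    branchPts (glue B) k = glue fun b => branchPts (B b) k := by
  ext w
  induction w using Fin.consCases with
  | cons b w =>
  simp only [mem_branchPts, Fin.exists_fin_succ_pi, cons_mem_glue, meetAge_cons_cons,
    trunc_cons hk, Fin.cons_inj]
  constructor
  · rintro ⟨a, u, hu, a', v, hv, hm, rfl, rfl⟩
    split_ifs at hm with ha
    · subst ha
      exact ⟨u, hu, v, hv, hm, rfl⟩
    · omega
  · rintro ⟨u, hu, v, hv, hm, rfl⟩
    exact ⟨b, u, hu, b, v, hv, by simp [hm], rfl, rfl⟩

lemma bcount_glue (B : Bool → Finset (Leaf n)) {k : ℕ} (hk : k ≤ n) :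
    bcount (glue B) k = ∑ b, bcount (B b) k := by
  rw [bcount, branchPts_glue B hk, card_glue]
  rfl

lemma bcount_glue_top (B : Bool → Finset (Leaf n)) :
    bcount (glue B) (n + 1) = if ∀ b, B b ≠ ∅ then 1 else 0 := by
  have hroot : ∀ w ∈ branchPts (glue B) (n + 1), w = fun _ => false := by
    intro w hw
    obtain ⟨u, -, v, -, -, rfl⟩ := mem_branchPts.mp hw
    funext i
    simp [trunc]
  have hne : (branchPts (glue B) (n + 1)).Nonempty ↔ ∀ b, B b ≠ ∅ := by
    simp only [Finset.Nonempty, mem_branchPts, Fin.exists_fin_succ_pi, cons_mem_glue,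
      meetAge_cons_cons]
    constructor
    · rintro ⟨-, -, a, u, hu, a', v, hv, hm, -⟩ b
      split_ifs at hm with ha
      · have := meetAge_le u v
        omega
      · have hb : b = a ∨ b = a' := by cases a <;> cases a' <;> cases b <;> simp_all
        rcases hb with rfl | rfl
        exacts [Finset.ne_empty_of_mem hu, Finset.ne_empty_of_mem hv]
    · intro h
      obtain ⟨u, hu⟩ := Finset.nonempty_iff_ne_empty.mpr (h false)
      obtain ⟨v, hv⟩ := Finset.nonempty_iff_ne_empty.mpr (h true)
      exact ⟨_, _, false, u, hu, true, v, hv, by simp, (Fin.cons_self_tail _).symm⟩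
  rw [bcount]
  split_ifs with h
  · obtain ⟨w, hw⟩ := hne.mpr h
    exact Finset.card_eq_one.mpr ⟨w, Finset.eq_singleton_iff_unique_mem.mpr
      ⟨hw, fun w' hw' => (hroot w' hw').trans (hroot w hw).symm⟩⟩
  · exact Finset.card_eq_zero.mpr (Finset.not_nonempty_iff_eq_empty.mp (mt hne.mp h))

end Tree

lemma sum_prod_bool_eq_sq {α R : Type*} [Fintype α] [CommSemiring R] (f : α → R) :
    ∑ B : Bool → α, ∏ b, f (B b) = (∑ a, f a) ^ 2 := by
  rw [← Fintype.prod_sum fun _ => f]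
  simp [sq]

section Weight

variable (hs : ℕ → ℝ) (J : ℝ) {n : ℕ}

def branchWeight (A : Finset (Leaf n)) : ℝ :=
  Real.exp (J * A.card - ∑ k ∈ Finset.range (n + 1), hs k * bcount A k)

lemma branchWeight_empty : branchWeight hs J (∅ : Finset (Leaf n)) = 1 := by
  simp [branchWeight, bcount, branchPts]

lemma branchWeight_glue (B : Bool → Finset (Leaf n)) :
    branchWeight hs J (glue B) =
      (∏ b, branchWeight hs J (B b)) * if ∀ b, B b ≠ ∅ then Real.exp (-hs (n + 1)) else 1 := by
  have hsplit : ∑ k ∈ Finset.range (n + 2), hs k * (bcount (glue B) k : ℝ) =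
      ∑ b, ∑ k ∈ Finset.range (n + 1), hs k * (bcount (B b) k : ℝ) +
        hs (n + 1) * bcount (glue B) (n + 1) := by
    rw [Finset.sum_range_succ, Finset.sum_comm]
    congr 1
    refine Finset.sum_congr rfl fun k hk => ?_
    rw [bcount_glue B (Finset.mem_range_succ_iff.mp hk), Nat.cast_sum, Finset.mul_sum]
  have hexp : ∏ b, branchWeight hs J (B b) =
      Real.exp (∑ b, (J * (B b).card - ∑ k ∈ Finset.range (n + 1), hs k * bcount (B b) k)) := by
    rw [Real.exp_sum]
    rfl
  rw [branchWeight, hsplit, hexp, card_glue, bcount_glue_top]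
  split_ifs
  · rw [← Real.exp_add]
    push_cast [Finset.sum_sub_distrib, Finset.mul_sum]
    ring_nf
  · push_cast [Finset.sum_sub_distrib, Finset.mul_sum]
    ring_nf

def dryWeight (n : ℕ) : ℝ :=
  ∑ A ∈ (Finset.univ : Finset (Finset (Leaf n))).erase ∅, branchWeight hs J A

lemma sum_branchWeight : ∑ A : Finset (Leaf n), branchWeight hs J A = 1 + dryWeight hs J n := by
  rw [dryWeight, ← Finset.add_sum_erase _ _ (Finset.mem_univ ∅), branchWeight_empty]

lemma sum_ite_branchWeight :
    ∑ A : Finset (Leaf n), (if A ≠ ∅ then branchWeight hs J A else 0) = dryWeight hs J n := by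
  rw [← Finset.sum_filter, Finset.filter_ne', dryWeight]

lemma dryWeight_pos (n : ℕ) : 0 < dryWeight hs J n :=
  Finset.sum_pos (fun _ _ => Real.exp_pos _)
    ⟨Finset.univ, Finset.mem_erase.mpr ⟨Finset.univ_nonempty.ne_empty, Finset.mem_univ _⟩⟩

lemma dryWeight_succ (n : ℕ) :
    dryWeight hs J (n + 1) =
      dryWeight hs J n * (2 + Real.exp (-hs (n + 1)) * dryWeight hs J n) := by
  have hglue : ∀ B : Bool → Finset (Leaf n), branchWeight hs J (glue B) =
      ∏ b, branchWeight hs J (B b) - (1 - Real.exp (-hs (n + 1))) *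
        ∏ b, (if B b ≠ ∅ then branchWeight hs J (B b) else 0) := by
    intro B
    rw [branchWeight_glue, Finset.prod_ite_zero]
    simp only [Finset.mem_univ, forall_const]
    split_ifs <;> ring
  have := sum_branchWeight hs J (n := n + 1)
  rw [← glue_bijective.sum_comp, Finset.sum_congr rfl fun B _ => hglue B, Finset.sum_sub_distrib,
    ← Finset.mul_sum, sum_prod_bool_eq_sq, sum_branchWeight,
    sum_prod_bool_eq_sq fun A => if A ≠ ∅ then branchWeight hs J A else 0,
    sum_ite_branchWeight] at this
  linear_combination -this

lemma Z_foPhi (n : ℕ) :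
    Z n (foPhi n hs (hs n)) J = 1 + Real.exp (-hs n) * dryWeight hs J n := by
  rw [Z, ← Finset.add_sum_erase _ _ (Finset.mem_univ ∅), dryWeight, Finset.mul_sum]
  congr 1
  · simp [foPhi]
  · refine Finset.sum_congr rfl fun A hA => ?_
    rw [foPhi, if_neg (Finset.ne_of_mem_erase hA), branchWeight, ← Real.exp_add]
    ring_nf

end Weight

section Doubling

open Real

lemma tendsto_const_div_two_pow (c : ℝ) : Tendsto (fun n : ℕ => c / 2 ^ n) atTop (nhds 0) :=
  tendsto_const_nhds.div_atTop (tendsto_pow_atTop_atTop_of_one_lt one_lt_two)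

variable {u h : ℕ → ℝ}

lemma exists_tendsto_div_two_pow {c : ℝ} (hsum : Summable fun k => h k / 2 ^ k)
    (hlow : ∀ n, 2 * u n - h (n + 1) ≤ u (n + 1)) (hup : ∀ n, u (n + 1) ≤ 2 * u n + c) :
    ∃ L, Tendsto (fun n => u n / 2 ^ n) atTop (nhds L) := by
  set d : ℕ → ℝ := fun n => u (n + 1) / 2 ^ (n + 1) - u n / 2 ^ n
  have hshift : Summable fun n => h (n + 1) / 2 ^ (n + 1) :=
    (summable_nat_add_iff 1).mpr hsum
  have hd : Summable d := by
    have hgap_eq : ∀ n, d n + h (n + 1) / 2 ^ (n + 1) =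
        (u (n + 1) - 2 * u n + h (n + 1)) / 2 ^ (n + 1) := fun n => by
      simp only [d, pow_succ]
      field_simp
    have hgap : Summable fun n => d n + h (n + 1) / 2 ^ (n + 1) := by
      refine Summable.of_nonneg_of_le (fun n => ?_) (fun n => ?_)
        ((((summable_nat_add_iff 1).mpr summable_geometric_two).mul_left c).add hshift)
      · rw [hgap_eq]
        exact div_nonneg (by linarith [hlow n]) (by positivity)
      · rw [hgap_eq, one_div_pow, mul_one_div, ← add_div]
        exact div_le_div_of_nonneg_right (by linarith [hup n]) (by positivity)
    simpa using hgap.sub hshift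
  refine ⟨u 0 + ∑' n, d n, (hd.hasSum.tendsto_sum_nat.const_add (u 0)).congr fun n => ?_⟩
  rw [Finset.sum_range_sub (fun n => u n / 2 ^ n)]
  simp

lemma tendsto_div_two_pow_of_le_of_le {v : ℕ → ℝ} {c L : ℝ}
    (hu : Tendsto (fun n => u n / 2 ^ n) atTop (nhds L))
    (hh : Tendsto (fun n => h n / 2 ^ n) atTop (nhds 0))
    (hlow : ∀ n, u n - h n ≤ v n) (hup : ∀ n, v n ≤ u n + c) :
    Tendsto (fun n => v n / 2 ^ n) atTop (nhds L) := by
  refine tendsto_of_tendsto_of_tendsto_of_le_of_le (g := fun n => u n / 2 ^ n - h n / 2 ^ n)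
    (h := fun n => u n / 2 ^ n + c / 2 ^ n) ?_ ?_ (fun n => ?_) (fun n => ?_)
  · simpa using hu.sub hh
  · simpa using hu.add (tendsto_const_div_two_pow c)
  · dsimp only
    rw [← sub_div]
    exact div_le_div_of_nonneg_right (hlow n) (by positivity)
  · dsimp only
    rw [← add_div]
    exact div_le_div_of_nonneg_right (hup n) (by positivity)

lemma pos_of_tendsto_div_two_pow {L C : ℝ} {m : ℕ}
    (hu : Tendsto (fun n => u n / 2 ^ n) atTop (nhds L))
    (hlow : ∀ n, 2 * u n - h (n + 1) ≤ u (n + 1))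
    (hh : ∀ n ≥ m, h (n + 1) ≤ (n + 1) * log 2 + log (n + 1) - C)
    (hm : (m + 3) * log 2 + log (m + 1) - C < u m) : 0 < L := by
  -- the excess of `u` over a bound compatible with `hh`; it at least doubles from `m` on
  set w : ℕ → ℝ := fun n => u n - ((n + 3) * log 2 + log (n + 1) - C)
  have hstep : ∀ n ≥ m, 2 * w n ≤ w (n + 1) := fun n hn => by
    have hlog : log ((n : ℝ) + 1 + 1) ≤ log 2 + log (n + 1) := by
      rw [← log_mul two_ne_zero (by positivity)]
      exact log_le_log (by positivity) (by linarith)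
    have := hlow n
    have := hh n hn
    simp only [w]
    push_cast
    linarith
  have hgrowth : ∀ n ≥ m, 2 ^ n * (w m / 2 ^ m) ≤ w n := by
    refine Nat.le_induction (by field_simp; rfl) fun n hn ih => ?_
    calc 2 ^ (n + 1) * (w m / 2 ^ m) = 2 * (2 ^ n * (w m / 2 ^ m)) := by ring
      _ ≤ 2 * w n := by linarith
      _ ≤ w (n + 1) := hstep n hn
  have hlower : ∀ n ≥ m, w m / 2 ^ m - C / 2 ^ n ≤ u n / 2 ^ n := fun n hn => by
    have hg : 0 ≤ (n + 3) * log 2 + log (n + 1) := by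
      have := log_nonneg (show (1 : ℝ) ≤ n + 1 by linarith [n.cast_nonneg (α := ℝ)])
      positivity
    rw [le_div_iff₀ (by positivity), sub_mul, div_mul_cancel₀ _ (by positivity)]
    have := hgrowth n hn
    simp only [w] at this
    nlinarith
  have hL : w m / 2 ^ m ≤ L :=
    le_of_tendsto_of_tendsto (by simpa using (tendsto_const_div_two_pow C).const_sub (w m / 2 ^ m))
      hu (eventually_atTop.mpr ⟨m, hlower⟩)
  have hw : 0 < w m := by simp only [w]; linarith
  exact (by positivity : 0 < w m / 2 ^ m).trans_le hL

end Doubling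

section Recursion

open Real

def IsBranchingRecursion (h x : ℕ → ℝ) : Prop :=
  ∀ n, x (n + 1) = x n * (2 + exp (-h (n + 1)) * x n)

variable {x h : ℕ → ℝ}

lemma pow_mul_le_of_rec
    (hrec : IsBranchingRecursion h x) (n : ℕ) :
    2 ^ n * x 0 ≤ x n := by
  induction n with
  | zero => simp
  | succ n ih =>
    have hsq : 0 ≤ exp (-h (n + 1)) * x n ^ 2 := by positivity
    rw [hrec n, pow_succ]
    linarith

lemma apply_zero_le_of_rec (hx0 : 0 ≤ x 0)
    (hrec : IsBranchingRecursion h x) (n : ℕ) : x 0 ≤ x n :=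
  le_trans (le_mul_of_one_le_left hx0 (one_le_pow₀ one_le_two)) (pow_mul_le_of_rec hrec n)

lemma log_succ_ge_of_rec (hx : ∀ n, 0 < x n)
    (hrec : IsBranchingRecursion h x) (n : ℕ) :
    2 * log (x n) - h (n + 1) ≤ log (x (n + 1)) := by
  have hle : exp (-h (n + 1)) * x n ^ 2 ≤ x (n + 1) := by
    rw [hrec n]
    nlinarith [hx n]
  calc 2 * log (x n) - h (n + 1) = log (exp (-h (n + 1)) * x n ^ 2) := by
        rw [log_mul (exp_pos _).ne' (pow_pos (hx n) 2).ne', log_exp, log_pow]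
        push_cast
        ring
    _ ≤ log (x (n + 1)) := log_le_log (by have := hx n; positivity) hle

lemma log_succ_le_of_rec (hx : ∀ n, 0 < x n)
    (hrec : IsBranchingRecursion h x) (hmono : Monotone h)
    (n : ℕ) : log (x (n + 1)) ≤ 2 * log (x n) + log (2 / x 0 + exp (-h 0)) := by
  have hx0 : x 0 ≤ x n := apply_zero_le_of_rec (hx 0).le hrec n
  have hle : x (n + 1) ≤ x n ^ 2 * (2 / x 0 + exp (-h 0)) := by
    have h2 : 2 / x n ≤ 2 / x 0 := div_le_div_of_nonneg_left zero_le_two (hx 0) hx0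
    have he : exp (-h (n + 1)) ≤ exp (-h 0) := exp_le_exp.mpr (neg_le_neg (hmono n.succ.zero_le))
    calc x (n + 1) = x n ^ 2 * (2 / x n + exp (-h (n + 1))) := by
          rw [hrec n]
          field_simp [(hx n).ne']
      _ ≤ _ := mul_le_mul_of_nonneg_left (by linarith) (by positivity)
  calc log (x (n + 1)) ≤ log (x n ^ 2 * (2 / x 0 + exp (-h 0))) :=
        log_le_log (hx _) hle
    _ = 2 * log (x n) + log (2 / x 0 + exp (-h 0)) := by
        have hc : 0 < 2 / x 0 + exp (-h 0) := by have := hx 0; positivity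
        rw [log_mul (pow_pos (hx n) 2).ne' hc.ne', log_pow]
        push_cast
        ring

lemma mul_two_pow_le_of_rec (hx : ∀ n, 0 < x n)
    (hrec : IsBranchingRecursion h x) {N : ℕ}
    (hN : ∀ k ≥ N, 4 / x 0 ≤ k * 2 ^ k * exp (-h k)) :
    ∀ n ≥ N, x 0 / (N + 1) * ((n + 1) * 2 ^ n) ≤ x n := by
  have hx0 := hx 0
  refine Nat.le_induction ?_ fun n hn ih => ?_
  · calc x 0 / (N + 1) * ((N + 1) * 2 ^ N) = 2 ^ N * x 0 := by field_simp
      _ ≤ x N := pow_mul_le_of_rec hrec N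
  · set c := x 0 / (N + 1)
    have hM := hN (n + 1) (by omega)
    push_cast at hM
    have hNn : (N : ℝ) ≤ n := by exact_mod_cast hn
    have hkey : 2 / (n + 1) ≤ exp (-h (n + 1)) * x n :=
      calc 2 / ((n : ℝ) + 1) ≤ 2 / (N + 1) := by gcongr
        _ = c / 2 * (4 / x 0) := by simp only [c]; field_simp; ring
        _ ≤ c / 2 * ((n + 1) * 2 ^ (n + 1) * exp (-h (n + 1))) := by gcongr
        _ = exp (-h (n + 1)) * (c * ((n + 1) * 2 ^ n)) := by ring
        _ ≤ exp (-h (n + 1)) * x n := by gcongr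
    calc c * ((↑(n + 1) + 1) * 2 ^ (n + 1)) = c * ((n + 1) * 2 ^ n) * (2 + 2 / (n + 1)) := by
          push_cast
          field_simp
          ring
      _ ≤ x n * (2 + exp (-h (n + 1)) * x n) :=
          mul_le_mul ih (by linarith) (by positivity) (hx n).le
      _ = x (n + 1) := (hrec n).symm

lemma eventually_le_of_tendsto_mul_two_pow_mul_exp
    (hlim : Tendsto (fun k : ℕ => (k : ℝ) * 2 ^ k * exp (-h k)) atTop atTop) (C : ℝ) :
    ∀ᶠ k : ℕ in atTop, h k ≤ k * log 2 + log k - C := by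
  filter_upwards [hlim.eventually_ge_atTop (exp C), eventually_ge_atTop 1] with k hk hk1
  have hk0 : (0 : ℝ) < k := by exact_mod_cast hk1
  have := log_le_log (exp_pos C) hk
  rw [log_exp, log_mul (by positivity) (exp_pos _).ne', log_mul hk0.ne' (by positivity), log_exp,
    log_pow] at this
  linarith

theorem exists_pos_tendsto_log_div_two_pow_of_rec (hx : ∀ n, 0 < x n)
    (hrec : IsBranchingRecursion h x) (hmono : Monotone h)
    (hsum : Summable fun k => h k / 2 ^ k)
    (hlim : Tendsto (fun k : ℕ => (k : ℝ) * 2 ^ k * exp (-h k)) atTop atTop) :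
    ∃ L, 0 < L ∧ Tendsto (fun n => log (x n) / 2 ^ n) atTop (nhds L) := by
  obtain ⟨L, hL⟩ := exists_tendsto_div_two_pow hsum (log_succ_ge_of_rec hx hrec)
    (log_succ_le_of_rec hx hrec hmono)
  refine ⟨L, ?_, hL⟩
  obtain ⟨N, hN⟩ := (hlim.eventually_ge_atTop (4 / x 0)).exists_forall_of_atTop
  set c := x 0 / (N + 1)
  obtain ⟨N', hN'⟩ := (eventually_le_of_tendsto_mul_two_pow_mul_exp hlim
    (3 * log 2 - log c + 1)).exists_forall_of_atTop
  refine pos_of_tendsto_div_two_pow hL (log_succ_ge_of_rec hx hrec) (m := max N N')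
    (C := 3 * log 2 - log c + 1) (fun n hn => ?_) ?_
  · have := hN' (n + 1) (by omega)
    push_cast at this
    linarith
  · have hc : 0 < c := by have := hx 0; positivity
    have hxm := mul_two_pow_le_of_rec hx hrec hN (max N N') (le_max_left _ _)
    have : log c + log (max N N' + 1) + max N N' * log 2 ≤ log (x (max N N')) := by
      calc _ = log (c * ((max N N' + 1) * 2 ^ max N N')) := by
            rw [log_mul hc.ne' (by positivity), log_mul (by positivity) (by positivity), log_pow]
            ring
        _ ≤ _ := log_le_log (by positivity) hxm
    push_cast at this ⊢
    linarith

theorem exists_pos_tendsto_log_one_add_div_two_pow_of_rec (hx : ∀ n, 0 < x n)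
    (hrec : IsBranchingRecursion h x) (hmono : Monotone h)
    (hsum : Summable fun k => h k / 2 ^ k)
    (hlim : Tendsto (fun k : ℕ => (k : ℝ) * 2 ^ k * exp (-h k)) atTop atTop) :
    ∃ L, 0 < L ∧ Tendsto (fun n => log (1 + exp (-h n) * x n) / 2 ^ n) atTop (nhds L) := by
  obtain ⟨L, hL, hlog⟩ := exists_pos_tendsto_log_div_two_pow_of_rec hx hrec hmono hsum hlim
  refine ⟨L, hL, tendsto_div_two_pow_of_le_of_le hlog hsum.tendsto_atTop_zero (fun n => ?_)
    (c := log (1 / x 0 + exp (-h 0))) (fun n => ?_)⟩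
  · calc log (x n) - h n = log (exp (-h n) * x n) := by
          rw [log_mul (exp_pos _).ne' (hx n).ne', log_exp]
          ring
      _ ≤ log (1 + exp (-h n) * x n) := log_le_log (by have := hx n; positivity) (by linarith)
  · have hx0 : x 0 ≤ x n := apply_zero_le_of_rec (hx 0).le hrec n
    have he : exp (-h n) ≤ exp (-h 0) := exp_le_exp.mpr (neg_le_neg (hmono n.zero_le))
    have hle : 1 + exp (-h n) * x n ≤ x n * (1 / x 0 + exp (-h 0)) := by
      calc 1 + exp (-h n) * x n = x n * (1 / x n + exp (-h n)) := by field_simp [(hx n).ne']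
        _ ≤ _ := mul_le_mul_of_nonneg_left
          (add_le_add (one_div_le_one_div_of_le (hx 0) hx0) he) (hx n).le
    calc log (1 + exp (-h n) * x n) ≤ log (x n * (1 / x 0 + exp (-h 0))) :=
          log_le_log (by have := hx n; positivity) hle
      _ = log (x n) + log (1 / x 0 + exp (-h 0)) :=
          log_mul (hx n).ne' (by have := hx 0; positivity : 0 < 1 / x 0 + exp (-h 0)).ne'

end Recursion

/-- Corollary 1.15: for non-decreasing `(h_k)` with `∑ 2⁻ᵏ h_k < ∞`
and first order branching clustering functions `Φ_n`, if `k 2ᵏ e^{-h_k} → ∞` then there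
is no wetting transition: `J* = -∞`, i.e. `ζ(J) > 0` for every `J`. -/
theorem stmt9 (hs : ℕ → ℝ) (hmono : Monotone hs)
    (hsum : Summable fun k : ℕ => hs k / 2 ^ k)
    (hlim : Tendsto (fun k : ℕ => (k : ℝ) * 2 ^ k * Real.exp (-hs k)) atTop atTop) :
    ∃ ζ : ℝ → ℝ,
      (∀ J : ℝ, Tendsto (fun n => zetaN n (foPhi n hs (hs n)) J) atTop (nhds (ζ J))) ∧
      ∀ J : ℝ, 0 < ζ J := by
  have key : ∀ J : ℝ, ∃ L, 0 < L ∧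
      Tendsto (fun n => zetaN n (foPhi n hs (hs n)) J) atTop (nhds L) := fun J => by
    simp only [zetaN, Z_foPhi]
    exact exists_pos_tendsto_log_one_add_div_two_pow_of_rec (dryWeight_pos hs J)
      (dryWeight_succ hs J) hmono hsum hlim
  choose ζ hζ_pos hζ using key
  exact ⟨ζ, hζ, hζ_pos⟩

end PWC
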